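/- Let m ≥ 2, α > 1/2, and let q1 = r/‖r‖ where r ∈ ℝ^m satisfies the power law r_g = r_max · g^(−α) with r_max > 0. Then for every i ∈ {2,…,m}, the entries of q1 satisfy q_{11} − q_{1i} ≥ (1 − 2^(−α))/√ζ(2α). -/

import Mathlib

/-- Riemann zeta function for real `s > 1`: `ζ(s) = ∑_{j=1}^∞ j^(−s)`. -/
noncomputable def zetaR (s : ℝ) : ℝ := ∑' j : ℕ, ((j : ℝ) + 1) ^ (-s)

/-- Euclidean (L2) norm of a vector. -/
noncomputable def enorm {k : ℕ} (v : Fin k → ℝ) : ℝ := Real.sqrt (∑ i, v i ^ 2)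

/-!
The normalization is scale invariant, so `q1 = p / ‖p‖` for the unscaled power law
`p g = g^(-α)`, whose first entry is `1`. Hence `q_{11} - q_{1i} = (1 - i^(-α)) / ‖p‖`, where
`i^(-α) ≤ 2^(-α)` because `i ≥ 2`, and `‖p‖² = ∑_{g ≤ m} g^(-2α)` is a partial sum of `ζ(2α)`.
-/

open Finset

lemma enorm_const_mul {k : ℕ} (c : ℝ) (v : Fin k → ℝ) :
    _root_.enorm (fun i => c * v i) = |c| * _root_.enorm v := by
  simp only [_root_.enorm, mul_pow, ← mul_sum, Real.sqrt_mul (sq_nonneg c), Real.sqrt_sq_eq_abs]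

lemma div_enorm_const_mul {k : ℕ} {c : ℝ} (hc : 0 < c) (v : Fin k → ℝ) :
    (fun i => c * v i / _root_.enorm (fun j => c * v j)) = fun i => v i / _root_.enorm v := by
  funext i
  rw [enorm_const_mul, abs_of_pos hc, mul_div_mul_left _ _ hc.ne']

/-- The paper's `g ↦ g^(-α)`, shifted to the `Fin m` indices `g = 0, …, m - 1`. -/
noncomputable def powerLaw (m : ℕ) (α : ℝ) : Fin m → ℝ := fun g => (((g : ℕ) : ℝ) + 1) ^ (-α)

lemma powerLaw_sq (m : ℕ) (α : ℝ) (g : Fin m) :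
    powerLaw m α g ^ 2 = (((g : ℕ) : ℝ) + 1) ^ (-(2 * α)) := by
  rw [powerLaw, ← Real.rpow_mul_natCast (by positivity)]
  ring_nf

lemma powerLaw_le_two_rpow_neg {m : ℕ} {α : ℝ} (hα : 0 ≤ α) {i : Fin m} (hi : (i : ℕ) ≠ 0) :
    powerLaw m α i ≤ (2 : ℝ) ^ (-α) := by
  have hi2 : (2 : ℝ) ≤ ((i : ℕ) : ℝ) + 1 := by
    have : (1 : ℝ) ≤ ((i : ℕ) : ℝ) := by exact_mod_cast Nat.one_le_iff_ne_zero.mpr hi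
    linarith
  exact Real.rpow_le_rpow_of_nonpos two_pos hi2 (neg_nonpos.mpr hα)

lemma enorm_powerLaw_pos {m : ℕ} (hm : 0 < m) (α : ℝ) : 0 < _root_.enorm (powerLaw m α) := by
  refine Real.sqrt_pos.mpr (sum_pos (fun g _ => ?_) ⟨⟨0, hm⟩, mem_univ _⟩)
  rw [powerLaw_sq]
  positivity

lemma summable_nat_add_one_rpow_neg {s : ℝ} (hs : 1 < s) :
    Summable (fun j : ℕ => ((j : ℝ) + 1) ^ (-s)) := by
  simpa using (summable_nat_add_iff 1).mpr (Real.summable_nat_rpow.mpr (neg_lt_neg hs))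

lemma enorm_powerLaw_le_sqrt_zetaR (m : ℕ) {α : ℝ} (hα : 1 / 2 < α) :
    _root_.enorm (powerLaw m α) ≤ Real.sqrt (zetaR (2 * α)) := by
  refine Real.sqrt_le_sqrt ?_
  simp only [powerLaw_sq]
  rw [Fin.sum_univ_eq_sum_range (fun j : ℕ => ((j : ℝ) + 1) ^ (-(2 * α))) m]
  exact (summable_nat_add_one_rpow_neg (by linarith)).sum_le_tsum _
    (fun j _ => Real.rpow_nonneg (by positivity) _)

/-- Let `m ≥ 2`, `α > 1/2`, and let `q1 = r/‖r‖` where `r ∈ ℝ^m`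
satisfies the power law `r_g = r_max · g^(−α)` with `r_max > 0`.  Then for every
`i ∈ {2,…,m}` (Fin-index `≠ 0`), `q_{11} − q_{1i} ≥ (1 − 2^(−α))/√ζ(2α)`. -/
theorem normalized_powerlaw_gap
    (m : ℕ) (hm : 2 ≤ m)
    (α rmax : ℝ) (hα : 1 / 2 < α) (hrmax : 0 < rmax)
    (r : Fin m → ℝ) (hpow : ∀ g : Fin m, r g = rmax * (((g : ℕ) : ℝ) + 1) ^ (-α))
    (q1 : Fin m → ℝ) (hq1 : q1 = fun i => r i / _root_.enorm r) :
    ∀ i : Fin m, (i : ℕ) ≠ 0 →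
      (1 - (2 : ℝ) ^ (-α)) / Real.sqrt (zetaR (2 * α)) ≤ q1 ⟨0, by omega⟩ - q1 i := by
  intro i hi
  have hr : r = fun g => rmax * powerLaw m α g := funext hpow
  have hq : q1 = fun g => powerLaw m α g / _root_.enorm (powerLaw m α) := by
    rw [hq1, hr, div_enorm_const_mul hrmax]
  have hfirst : powerLaw m α ⟨0, by omega⟩ = 1 := by simp [powerLaw]
  have hpi := powerLaw_le_two_rpow_neg (by linarith : (0 : ℝ) ≤ α) hi
  have hnum_nonneg : 0 ≤ 1 - (2 : ℝ) ^ (-α) :=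
    sub_nonneg.mpr (Real.rpow_le_one_of_one_le_of_nonpos one_le_two (by linarith))
  rw [hq, div_sub_div_same, hfirst]
  exact div_le_div₀ (by linarith) (by linarith) (enorm_powerLaw_pos (by omega) α)
    (enorm_powerLaw_le_sqrt_zetaR m hα)
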